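/- Let q = p^α, where p is an odd prime and α ≥ 1 is an integer, and let A, B, C, D, E be complex-valued Dirichlet characters mod q. Then for every x ∈ ℤ/qℤ: ₃F₂(A,B,C;D,E|x) = (ε(x)·(B·C·D·E)(−1)/q²)·Σ_{y,z ∈ ℤ/qℤ} C(y)·(C̄E)(1−y)·B(z)·(B̄D)(1−z)·Ā(1−xyz), where ε is the trivial character mod q. -/

import Mathlib

/-
The substitution `z ↦ -z/(1-z)` gives `J(φ, ψ) = φ(-1) J(φ, (φψ)⁻¹)`. Applied to the three
binomials, it removes `χ` from the second argument of each Jacobi sum: `binom(Bχ, Dχ)` becomes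
`(BD)(-1)/q · Σ_z B(z)(B̄D)(1-z)χ(z)` and `binom(Aχ, χ)` becomes `(1/q) Σ_t Ā(1-t)χ̄(t)`.
Orthogonality of Dirichlet characters then collapses the sum over `χ` and `t` to `t = xyz`.
-/

open Finset

/-- The complex-conjugate Dirichlet character. -/
noncomputable def conjChar {q : ℕ} (A : DirichletCharacter ℂ q) : DirichletCharacter ℂ q :=
  A.ringHomComp (starRingEnd ℂ)

/-- The binomial coefficient `binom(A,B) = B(-1)/q * J(A, B̄)` for Dirichlet characters. -/
noncomputable def dBinom {q : ℕ} [NeZero q] (A B : DirichletCharacter ℂ q) : ℂ :=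
  B (-1) / q * jacobiSum A (conjChar B)

/-- The hypergeometric function `₃F₂` for Dirichlet characters. -/
noncomputable def threeF₂ {q : ℕ} [NeZero q] (A B C D E : DirichletCharacter ℂ q)
    (x : ZMod q) : ℂ :=
  (q / (Nat.totient q : ℂ)) *
    ∑ᶠ χ : DirichletCharacter ℂ q,
      dBinom (A * χ) χ * dBinom (B * χ) (D * χ) * dBinom (C * χ) (E * χ) * χ x

section JacobiSum

variable {R R' : Type*} [CommRing R] [Fintype R] [CommRing R']

lemma Fintype.sum_eq_sum_units {M : Type*} [AddCommMonoid M] [Fintype Rˣ] {f : R → M}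
    (hf : ∀ t, ¬IsUnit t → f t = 0) : ∑ t, f t = ∑ u : Rˣ, f u :=
  (Fintype.sum_of_injective _ Units.val_injective _ f hf fun _ => rfl).symm

omit [Fintype R] in
lemma Units.one_sub_inv (u : Rˣ) : 1 - (↑u⁻¹ : R) = -1 * ↑u⁻¹ * (1 - u) := by
  rw [mul_assoc, mul_sub, mul_one, Units.inv_mul]
  ring

lemma jacobiSum_eq_apply_neg_one_mul (χ ψ : MulChar R R') :
    jacobiSum χ ψ = χ (-1) * jacobiSum χ (χ * ψ)⁻¹ := by
  classical
  rw [jacobiSum_comm, jacobiSum_comm χ, jacobiSum, jacobiSum, mul_sum,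
    Fintype.sum_eq_sum_units (f := fun t => ψ t * χ (1 - t))
      fun t ht => by rw [ψ.map_nonunit ht, zero_mul],
    Fintype.sum_eq_sum_units (f := fun t => χ (-1) * ((χ * ψ)⁻¹ t * χ (1 - t)))
      fun t ht => by rw [MulChar.map_nonunit _ ht, zero_mul, mul_zero],
    ← Equiv.sum_comp (Equiv.inv Rˣ)]
  refine sum_congr rfl fun u _ => ?_
  rw [Equiv.inv_apply, Units.one_sub_inv, map_mul, map_mul, MulChar.inv_apply, Ring.inverse_unit,
    MulChar.mul_apply]
  ring

lemma jacobiSum_mul_inv (χ ψ : MulChar R R') :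
    jacobiSum (χ * ψ) χ⁻¹ = χ⁻¹ (-1) * ∑ t, χ⁻¹ (1 - t) * ψ⁻¹ t := by
  rw [jacobiSum_comm, jacobiSum_eq_apply_neg_one_mul, inv_mul_cancel_left, jacobiSum_comm,
    jacobiSum]
  simp only [mul_comm (ψ⁻¹ _)]

lemma jacobiSum_mul_jacobiSum_mul_apply (B C D E χ : MulChar R R') (x : R) :
    jacobiSum (C * χ) (C⁻¹ * E) * jacobiSum (B * χ) (B⁻¹ * D) * χ x =
      ∑ y, ∑ z, C y * (C⁻¹ * E) (1 - y) * B z * (B⁻¹ * D) (1 - z) * χ (x * y * z) := by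
  rw [jacobiSum, jacobiSum, sum_mul_sum, sum_mul]
  simp only [sum_mul, map_mul, MulChar.mul_apply]
  refine sum_congr rfl fun y _ => sum_congr rfl fun z _ => ?_
  ring

end JacobiSum

section Orthogonality

variable {R : Type*} [CommRing R] [IsDomain R] {n : ℕ} [NeZero n]
  [HasEnoughRootsOfUnity R (Monoid.exponent (ZMod n)ˣ)]

namespace DirichletCharacter

lemma sum_inv_apply_mul_apply (t w : ZMod n) :
    ∑ χ : DirichletCharacter R n, χ⁻¹ t * χ w =
      if t = w then n.totient * (1 : DirichletCharacter R n) w else 0 := by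
  by_cases ht : IsUnit t
  · obtain ⟨u, rfl⟩ := ht
    simp only [MulChar.inv_apply, Ring.inverse_unit, ← map_mul, sum_characters_eq,
      Units.inv_mul_eq_one]
    split_ifs with h
    · rw [← h, MulChar.one_apply_coe, mul_one]
    · rfl
  · simp only [MulChar.map_nonunit _ ht, zero_mul, sum_const_zero]
    split_ifs with h
    · rw [← h, MulChar.map_nonunit _ ht, mul_zero]
    · rfl

lemma sum_sum_mul_inv_apply_mul_apply (f : ZMod n → R) (w : ZMod n) :
    ∑ χ : DirichletCharacter R n, (∑ t, f t * χ⁻¹ t) * χ w =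
      n.totient * (1 : DirichletCharacter R n) w * f w := by
  simp only [sum_mul, mul_assoc]
  rw [sum_comm]
  simp only [← mul_sum, sum_inv_apply_mul_apply, mul_ite, mul_zero, sum_ite_eq', mem_univ,
    if_true]
  ring

lemma sum_jacobiSum_mul_inv_mul_apply (A : DirichletCharacter R n) (w : ZMod n) :
    ∑ χ : DirichletCharacter R n, jacobiSum (A * χ) A⁻¹ * χ w =
      A⁻¹ (-1) * n.totient * (1 : DirichletCharacter R n) w * A⁻¹ (1 - w) := by
  simp only [jacobiSum_mul_inv, mul_assoc, ← mul_sum, sum_sum_mul_inv_apply_mul_apply]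

lemma sum_jacobiSum_mul_jacobiSum_mul_jacobiSum_mul_apply (A B C D E : DirichletCharacter R n)
    (x : ZMod n) :
    ∑ χ : DirichletCharacter R n,
        jacobiSum (A * χ) A⁻¹ * (jacobiSum (C * χ) (C⁻¹ * E) * jacobiSum (B * χ) (B⁻¹ * D) * χ x) =
      A⁻¹ (-1) * n.totient * (1 : DirichletCharacter R n) x *
        ∑ y, ∑ z, C y * (C⁻¹ * E) (1 - y) * B z * (B⁻¹ * D) (1 - z) * A⁻¹ (1 - x * y * z) := by
  simp only [jacobiSum_mul_jacobiSum_mul_apply, mul_sum]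
  rw [sum_comm]
  refine sum_congr rfl fun y _ => ?_
  rw [sum_comm]
  refine sum_congr rfl fun z _ => ?_
  have hC : (1 : DirichletCharacter R n) y * C y = C y := by
    rw [← MulChar.mul_apply, MulChar.one_mul]
  have hB : (1 : DirichletCharacter R n) z * B z = B z := by
    rw [← MulChar.mul_apply, MulChar.one_mul]
  set g := C y * (C⁻¹ * E) (1 - y) * B z * (B⁻¹ * D) (1 - z)
  calc _ = g * ∑ χ : DirichletCharacter R n, jacobiSum (A * χ) A⁻¹ * χ (x * y * z) := by
        rw [mul_sum]
        exact sum_congr rfl fun χ _ => by ring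
    _ = _ := by
        rw [sum_jacobiSum_mul_inv_mul_apply, map_mul, map_mul]
        linear_combination A⁻¹ (-1) * n.totient * (1 : DirichletCharacter R n) x *
          (C⁻¹ * E) (1 - y) * (B⁻¹ * D) (1 - z) * A⁻¹ (1 - x * y * z) *
          ((1 : DirichletCharacter R n) z * B z * hC + C y * hB)

end DirichletCharacter

end Orthogonality

section Hypergeometric

lemma conjChar_eq_inv {q : ℕ} (A : DirichletCharacter ℂ q) : conjChar A = A⁻¹ :=
  MulChar.star_eq_inv A

variable {q : ℕ} [NeZero q]

lemma dBinom_mul_mul (B D χ : DirichletCharacter ℂ q) :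
    dBinom (B * χ) (D * χ) = B (-1) * D (-1) / q * jacobiSum (B * χ) (B⁻¹ * D) := by
  have hχ : χ (-1) * χ (-1) = 1 := by rw [← map_mul, neg_mul_neg, one_mul, map_one]
  have hinv : (B * χ * (D * χ)⁻¹)⁻¹ = B⁻¹ * D := by
    rw [← div_eq_mul_inv, mul_div_mul_right_eq_div, inv_div, div_eq_inv_mul]
  rw [dBinom, conjChar_eq_inv, jacobiSum_eq_apply_neg_one_mul, hinv, MulChar.mul_apply,
    MulChar.mul_apply]
  linear_combination B (-1) * D (-1) / q * jacobiSum (B * χ) (B⁻¹ * D) * hχ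

lemma dBinom_mul_self (A χ : DirichletCharacter ℂ q) :
    dBinom (A * χ) χ = A (-1) / q * jacobiSum (A * χ) A⁻¹ := by
  simpa [MulChar.one_apply isUnit_one.neg] using dBinom_mul_mul A 1 χ

end Hypergeometric

theorem threeF₂_double_sum_general (q : ℕ) [NeZero q] (A B C D E : DirichletCharacter ℂ q) :
    ∀ x : ZMod q,
      threeF₂ A B C D E x =
        ((1 : DirichletCharacter ℂ q) x * (B * C * D * E) (-1) / (q : ℂ) ^ 2) *
          ∑ y : ZMod q, ∑ z : ZMod q,
            C y * (conjChar C * E) (1 - y) * B z * (conjChar B * D) (1 - z) *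
              conjChar A (1 - x * y * z) := by
  intro x
  have hq : (q : ℂ) ≠ 0 := NeZero.ne _
  have hφ : (q.totient : ℂ) ≠ 0 := Nat.cast_ne_zero.mpr (Nat.totient_pos.mpr (NeZero.pos q)).ne'
  have hA : A (-1) ≠ 0 := (isUnit_one.neg.map A).ne_zero
  rw [threeF₂, finsum_eq_sum_of_fintype]
  simp only [dBinom_mul_self, dBinom_mul_mul, conjChar_eq_inv]
  calc _ = q / q.totient * (A (-1) * B (-1) * C (-1) * D (-1) * E (-1) / q ^ 3) *
        ∑ χ : DirichletCharacter ℂ q, jacobiSum (A * χ) A⁻¹ *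
          (jacobiSum (C * χ) (C⁻¹ * E) * jacobiSum (B * χ) (B⁻¹ * D) * χ x) := by
        simp only [mul_sum]
        exact sum_congr rfl fun χ _ => by ring
    _ = _ := by
        rw [DirichletCharacter.sum_jacobiSum_mul_jacobiSum_mul_jacobiSum_mul_apply,
          MulChar.inv_apply_eq_inv' A (-1)]
        simp only [MulChar.mul_apply]
        field_simp

theorem threeF₂_double_sum (p α : ℕ) (hp : p.Prime) (hodd : Odd p) (hα : 1 ≤ α)
    (q : ℕ) (hq : q = p ^ α) [NeZero q] (A B C D E : DirichletCharacter ℂ q) :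
    ∀ x : ZMod q,
      threeF₂ A B C D E x =
        ((1 : DirichletCharacter ℂ q) x * (B * C * D * E) (-1) / (q : ℂ) ^ 2) *
          ∑ y : ZMod q, ∑ z : ZMod q,
            C y * (conjChar C * E) (1 - y) * B z * (conjChar B * D) (1 - z) *
              conjChar A (1 - x * y * z) :=
  threeF₂_double_sum_general q A B C D E
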